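/- Let (H,•,1,Δ,ε,T) be a Hopf algebra, let ⇀ be the left adjoint action a⇀b := a₁•b•T(a₂), and let ↼ be the trivial right action a↼b := a ε(b). Then (H,⇀,↼) is a matched pair of actions on H if and only if Δ is left H-linear with respect to ⇀, i.e. Δ(a⇀b) = (a₁⇀b₁)⊗(a₂⇀b₂) for all a,b. -/

import Mathlib

open TensorProduct

noncomputable section

variable (k H : Type*) [Field k] [Ring H] [HopfAlgebra k H]

/-- Multiplication of `H` as a linear map. -/
def mu : H ⊗[k] H →ₗ[k] H := LinearMap.mul' k H
/-- Comultiplication. -/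
def delta : H →ₗ[k] H ⊗[k] H := Coalgebra.comul
/-- Counit. -/
def eps : H →ₗ[k] k := Coalgebra.counit
/-- Flip `a⊗b ↦ b⊗a`. -/
def tau : H ⊗[k] H →ₗ[k] H ⊗[k] H := (TensorProduct.comm k H H).toLinearMap
/-- Associator. -/
def assocMap : (H ⊗[k] H) ⊗[k] H →ₗ[k] H ⊗[k] (H ⊗[k] H) :=
  (TensorProduct.assoc k H H H).toLinearMap
/-- Inverse associator. -/
def assocInv : H ⊗[k] (H ⊗[k] H) →ₗ[k] (H ⊗[k] H) ⊗[k] H :=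
  (TensorProduct.assoc k H H H).symm.toLinearMap
/-- The middle-four interchange `(a⊗b)⊗(c⊗d) ↦ (a⊗c)⊗(b⊗d)`. -/
def ttcMap : (H ⊗[k] H) ⊗[k] (H ⊗[k] H) →ₗ[k] (H ⊗[k] H) ⊗[k] (H ⊗[k] H) :=
  (TensorProduct.tensorTensorTensorComm k H H H H).toLinearMap
/-- `a⊗b ↦ (a₁⊗b₁)⊗(a₂⊗b₂)` (Sweedler notation). -/
def dd : H ⊗[k] H →ₗ[k] (H ⊗[k] H) ⊗[k] (H ⊗[k] H) :=
  ttcMap k H ∘ₗ map (delta k H) (delta k H)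
/-- `a⊗b ↦ ((a₁⊗b₁)⊗(a₂⊗b₂))⊗(a₃⊗b₃)`. -/
def ddd : H ⊗[k] H →ₗ[k] ((H ⊗[k] H) ⊗[k] (H ⊗[k] H)) ⊗[k] (H ⊗[k] H) :=
  map (dd k H) LinearMap.id ∘ₗ dd k H
/-- `a⊗b ↦ ε(a)ε(b)`. -/
def epseps : H ⊗[k] H →ₗ[k] k := LinearMap.mul' k k ∘ₗ map (eps k H) (eps k H)
/-- `σ(a⊗b) = (a₁⇀b₁)⊗(a₂↼b₂)` attached to a pair of "actions". -/
def sig (l r : H ⊗[k] H →ₗ[k] H) : H ⊗[k] H →ₗ[k] H ⊗[k] H :=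
  map l r ∘ₗ dd k H

/-- The antipode of `H`. -/
def anti : H →ₗ[k] H := HopfAlgebra.antipode k

/-- A matched pair of actions `(H,⇀,↼)` on the Hopf algebra `H` (Definition 2.1):
`l`, `r` are a left and a right action of `H` on itself making `H` a left and right
`H`-module coalgebra, satisfying (mp.1)–(mp.4) and the braided commutativity (★). -/
structure MatchedPairOfActions (l r : H ⊗[k] H →ₗ[k] H) : Prop where
  one_act : ∀ b : H, l ((1 : H) ⊗ₜ[k] b) = b
  mul_act : ∀ a b c : H, l ((a * b) ⊗ₜ[k] c) = l (a ⊗ₜ[k] l (b ⊗ₜ[k] c))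
  act_one : ∀ a : H, r (a ⊗ₜ[k] (1 : H)) = a
  act_mul : ∀ a b c : H, r (a ⊗ₜ[k] (b * c)) = r (r (a ⊗ₜ[k] b) ⊗ₜ[k] c)
  comul_l : delta k H ∘ₗ l = map l l ∘ₗ dd k H
  counit_l : eps k H ∘ₗ l = epseps k H
  comul_r : delta k H ∘ₗ r = map r r ∘ₗ dd k H
  counit_r : eps k H ∘ₗ r = epseps k H
  mp1 : ∀ a : H, l (a ⊗ₜ[k] (1 : H)) = eps k H a • (1 : H)
  mp2 : ∀ b : H, r ((1 : H) ⊗ₜ[k] b) = eps k H b • (1 : H)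
  mp3 : l ∘ₗ map LinearMap.id (mu k H) ∘ₗ assocMap k H
      = mu k H ∘ₗ map LinearMap.id l ∘ₗ assocMap k H ∘ₗ map (sig k H l r) LinearMap.id
  mp4 : r ∘ₗ map (mu k H) LinearMap.id
      = mu k H ∘ₗ map r LinearMap.id ∘ₗ assocInv k H ∘ₗ map LinearMap.id (sig k H l r) ∘ₗ
          assocMap k H
  star : mu k H ∘ₗ sig k H l r = mu k H

/-- The second product `a·b := a₁•(T(a₂)⇀b)` attached to a left action `l = ⇀`. -/
def cdot (l : H ⊗[k] H →ₗ[k] H) : H ⊗[k] H →ₗ[k] H :=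
  mu k H ∘ₗ map LinearMap.id l ∘ₗ assocMap k H ∘ₗ
    map (map LinearMap.id (anti k H) ∘ₗ delta k H) LinearMap.id

/-- The map `S(a) := a₁⇀T(a₂)` attached to a left action `l = ⇀`. -/
def Smap (l : H ⊗[k] H →ₗ[k] H) : H →ₗ[k] H :=
  l ∘ₗ map LinearMap.id (anti k H) ∘ₗ delta k H

/-- The left adjoint action `a⇀b := a₁•b•T(a₂)`. -/
def adAct : H ⊗[k] H →ₗ[k] H :=
  mu k H ∘ₗ map (mu k H) (anti k H) ∘ₗ assocInv k H ∘ₗ map LinearMap.id (tau k H) ∘ₗ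
    assocMap k H ∘ₗ map (delta k H) LinearMap.id

/-- The trivial right action `a↼b := ε(b)a`. -/
def trivR : H ⊗[k] H →ₗ[k] H :=
  (TensorProduct.rid k H).toLinearMap ∘ₗ map LinearMap.id (eps k H)

/-! For fixed `b`, the adjoint action `a ↦ a ⇀ b` is the convolution `ρ_b * T` of right
multiplication by `b` with the antipode. As `T * ρ_c = ρ_c ∘ (T * id) = ε(-) c`, one gets
`(ρ_b * T) * (ρ_c * T) = ρ_{bc} * T` and `(ρ_b * T) * id = ρ_b`; since `↼` is trivial these are
(mp.3) and (★). Every other axiom apart from the comultiplicativity of `⇀` thus holds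
unconditionally, the rest being Sweedler computations with the counit and the
anti-multiplicativity of `T`. -/

open Coalgebra HopfAlgebra WithConv LinearMap

lemma toConv_mulRight_comp_convMul {R A C : Type*} [CommSemiring R] [NonUnitalSemiring A]
    [Module R A] [SMulCommClass R A A] [IsScalarTower R A A] [AddCommMonoid C] [Module R C]
    [CoalgebraStruct R C] (c : A) (f g : WithConv (C →ₗ[R] A)) :
    toConv (mulRight R c ∘ₗ (f * g).ofConv) = f * toConv (mulRight R c ∘ₗ g.ofConv) := by
  ext x
  simp [(ℛ R x).convMul_apply, mul_assoc]

namespace Coalgebra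
variable {R A ι : Type*} [CommSemiring R] [AddCommMonoid A] [Module R A] [Coalgebra R A] {a : A}

lemma sum_counit_right_smul (𝓡 : Repr R a ι) :
    ∑ i ∈ 𝓡.index, counit (R := R) (𝓡.right i) • 𝓡.left i = a := by
  have := congr(_root_.TensorProduct.rid R A $(sum_tmul_counit_eq (R := R) 𝓡))
  simpa only [map_sum, _root_.TensorProduct.rid_tmul, one_smul] using this

lemma sum_counit_mul_counit (𝓡 : Repr R a ι) :
    ∑ i ∈ 𝓡.index, counit (R := R) (𝓡.left i) * counit (R := R) (𝓡.right i) = counit a := by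
  simpa [map_sum] using congr(counit (R := R) $(sum_counit_smul 𝓡))

end Coalgebra

variable {k H}

variable (k) in
def adConv (b : H) : WithConv (H →ₗ[k] H) := toConv (mulRight k b) * toConv (antipode k)

lemma adAct_tmul (a b : H) : adAct k H (a ⊗ₜ b) = adConv k b a := by
  rw [adConv, (ℛ k a).convMul_apply]
  simp [adAct, delta, anti, mu, tau, assocMap, assocInv, ← (ℛ k a).eq, TensorProduct.sum_tmul,
    mul_assoc]

lemma adAct_tmul_eq_sum {ι : Type*} {a : H} (𝓡 : Repr k a ι) (b : H) :
    adAct k H (a ⊗ₜ b) = ∑ i ∈ 𝓡.index, 𝓡.left i * b * antipode k (𝓡.right i) := by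
  simp [adAct_tmul, adConv, 𝓡.convMul_apply]

lemma adConv_mul_adConv (b c : H) : adConv k b * adConv k c = adConv k (b * c) := by
  have antipode_mul_mulRight : toConv (antipode k) * toConv (mulRight k c) =
      toConv (mulRight k c ∘ₗ (1 : WithConv (H →ₗ[k] H)).ofConv) := by
    rw [← antipode_mul_id, toConv_mulRight_comp_convMul, comp_id]
  simp only [adConv, mul_assoc]
  rw [← mul_assoc (toConv (antipode k)), antipode_mul_mulRight, ← mul_assoc,
    ← toConv_mulRight_comp_convMul, mul_one, ofConv_toConv, ← mulRight_mul]

lemma adConv_mul_id (b : H) : adConv k b * toConv LinearMap.id = toConv (mulRight k b) := by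
  rw [adConv, mul_assoc, antipode_mul_id, mul_one]

lemma adAct_one_tmul (b : H) : adAct k H (1 ⊗ₜ b) = b := by
  simp [adAct_tmul, adConv, Algebra.TensorProduct.one_def]

lemma adAct_mul_tmul (a b c : H) :
    adAct k H ((a * b) ⊗ₜ c) = adAct k H (a ⊗ₜ adAct k H (b ⊗ₜ c)) := by
  simp only [adAct_tmul_eq_sum ((ℛ k a).mul (ℛ k b)), adAct_tmul_eq_sum (ℛ k a),
    adAct_tmul_eq_sum (ℛ k b), Repr.mul_left, Repr.mul_right, Repr.mul_index,
    Finset.sum_product, antipode_mul_antidistrib, Finset.mul_sum, Finset.sum_mul, mul_assoc]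

lemma adAct_tmul_one (a : H) : adAct k H (a ⊗ₜ 1) = eps k H a • 1 := by
  rw [adAct_tmul, adConv, mulRight_one, id_mul_antipode, convOne_apply,
    Algebra.algebraMap_eq_smul_one]
  rfl

lemma adAct_tmul_mul {ι : Type*} {a : H} (𝓡 : Repr k a ι) (b c : H) :
    adAct k H (a ⊗ₜ (b * c)) =
      ∑ i ∈ 𝓡.index, adAct k H (𝓡.left i ⊗ₜ b) * adAct k H (𝓡.right i ⊗ₜ c) := by
  simp only [adAct_tmul, ← adConv_mul_adConv, 𝓡.convMul_apply]

lemma counit_adAct_tmul (a b : H) : eps k H (adAct k H (a ⊗ₜ b)) = eps k H a * eps k H b := by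
  simp only [adAct_tmul_eq_sum (ℛ k a), map_sum, eps, Bialgebra.counit_mul, counit_antipode]
  rw [← sum_counit_mul_counit (ℛ k a), Finset.sum_mul]
  exact Finset.sum_congr rfl fun _ _ => mul_right_comm _ _ _

lemma trivR_tmul (a b : H) : trivR k H (a ⊗ₜ b) = eps k H b • a := by
  simp [trivR]

lemma comul_comp_trivR : delta k H ∘ₗ trivR k H = map (trivR k H) (trivR k H) ∘ₗ dd k H := by
  refine TensorProduct.ext' fun a b => ?_
  simp only [coe_comp, Function.comp_apply, dd, ttcMap, delta, trivR_tmul, map_smul,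
    ← (ℛ k a).eq, ← (ℛ k b).eq, TensorProduct.sum_tmul, TensorProduct.tmul_sum, map_sum,
    LinearEquiv.coe_coe, tensorTensorTensorComm_tmul, TensorProduct.map_tmul,
    TensorProduct.tmul_smul, ← TensorProduct.smul_tmul', smul_smul]
  simp only [← Finset.smul_sum, ← Finset.sum_smul, eps]
  rw [← sum_counit_mul_counit (ℛ k b)]
  simp only [mul_comm]

lemma sig_trivR_tmul (l : H ⊗[k] H →ₗ[k] H) {ι : Type*} {a : H} (𝓡 : Repr k a ι) (b : H) :
    sig k H l (trivR k H) (a ⊗ₜ b) = ∑ i ∈ 𝓡.index, l (𝓡.left i ⊗ₜ b) ⊗ₜ 𝓡.right i := by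
  simp only [sig, dd, ttcMap, delta, coe_comp, Function.comp_apply, TensorProduct.map_tmul,
    ← 𝓡.eq, ← (ℛ k b).eq, TensorProduct.sum_tmul, TensorProduct.tmul_sum, map_sum,
    LinearEquiv.coe_coe, tensorTensorTensorComm_tmul, trivR_tmul]
  rw [Finset.sum_comm]
  refine Finset.sum_congr rfl fun i _ => ?_
  conv_rhs => rw [← sum_counit_right_smul (ℛ k b), TensorProduct.tmul_sum, map_sum,
    TensorProduct.sum_tmul]
  refine Finset.sum_congr rfl fun j _ => ?_
  rw [TensorProduct.tmul_smul, TensorProduct.tmul_smul, map_smul, TensorProduct.smul_tmul']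
  rfl

lemma mp3_adAct_trivR :
    adAct k H ∘ₗ map LinearMap.id (mu k H) ∘ₗ assocMap k H
      = mu k H ∘ₗ map LinearMap.id (adAct k H) ∘ₗ assocMap k H ∘ₗ
          map (sig k H (adAct k H) (trivR k H)) LinearMap.id := by
  refine TensorProduct.ext_threefold fun a b c => ?_
  simp [assocMap, mu, sig_trivR_tmul _ (ℛ k a), adAct_tmul_mul (ℛ k a), TensorProduct.sum_tmul,
    map_sum]

lemma mp4_adAct_trivR :
    trivR k H ∘ₗ map (mu k H) LinearMap.id
      = mu k H ∘ₗ map (trivR k H) LinearMap.id ∘ₗ assocInv k H ∘ₗ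
          map LinearMap.id (sig k H (adAct k H) (trivR k H)) ∘ₗ assocMap k H := by
  refine TensorProduct.ext_threefold fun a b c => ?_
  simp [assocMap, assocInv, mu, sig_trivR_tmul _ (ℛ k b), trivR_tmul, counit_adAct_tmul,
    TensorProduct.tmul_sum, map_sum]
  conv_lhs => rw [← sum_counit_smul (ℛ k b)]
  simp [Finset.mul_sum, Finset.smul_sum, smul_smul, mul_comm, eps]

lemma star_adAct_trivR : mu k H ∘ₗ sig k H (adAct k H) (trivR k H) = mu k H := by
  refine TensorProduct.ext' fun a b => ?_
  have h := (ℛ k a).convMul_apply (adConv k b) (toConv LinearMap.id)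
  rw [adConv_mul_id] at h
  simpa [sig_trivR_tmul _ (ℛ k a), mu, map_sum, adAct_tmul] using h.symm

/-- Lemma 3.16: with `⇀` the left adjoint action and `↼` the trivial right
action, `(H,⇀,↼)` is a matched pair of actions if and only if `Δ` is left linear with
respect to `⇀`, i.e. `Δ(a⇀b) = (a₁⇀b₁)⊗(a₂⇀b₂)`. -/
theorem matchedPair_adjoint_iff_comul_linear :
    MatchedPairOfActions k H (adAct k H) (trivR k H) ↔
      delta k H ∘ₗ adAct k H = map (adAct k H) (adAct k H) ∘ₗ dd k H := by
  refine ⟨MatchedPairOfActions.comul_l, fun comul_l => ?_⟩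
  exact
    { one_act := adAct_one_tmul
      mul_act := adAct_mul_tmul
      act_one := fun a => by simp [trivR_tmul, eps]
      act_mul := fun a b c => by simp [trivR_tmul, eps, smul_smul, mul_comm]
      comul_l := comul_l
      counit_l := TensorProduct.ext' counit_adAct_tmul
      comul_r := comul_comp_trivR
      counit_r := TensorProduct.ext' fun a b => by simp [trivR_tmul, epseps, mul_comm]
      mp1 := adAct_tmul_one
      mp2 := trivR_tmul 1
      mp3 := mp3_adAct_trivR
      mp4 := mp4_adAct_trivR
      star := star_adAct_trivR }

end
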